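/- Let E be a directed graph. The collection of compact open invariant subsets of the unit space of the graph groupoid G_E satisfies the descending chain condition: every decreasing chain of compact open invariant subsets stabilizes. Moreover, every nonempty compact open invariant subset contains a minimal compact open invariant subset. -/

import Mathlib

/-- A directed graph: vertices, edges, source and range maps. -/
structure EGraph where
  V : Type
  E : Type
  s : E → V
  r : E → V

/-- A walk: a candidate finite path, given by a source vertex and a list of edges. -/
structure Walk (G : EGraph) where
  src : G.V
  edges : List G.E

/-- The range (final vertex) of a walk. -/
def Walk.rng {G : EGraph} (p : Walk G) : G.V :=
  match p.edges.getLast? with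
  | none => p.src
  | some e => G.r e

/-- Appending two walks. -/
def Walk.append {G : EGraph} (p q : Walk G) : Walk G := ⟨p.src, p.edges ++ q.edges⟩

/-- The `n`-fold power of a walk (concatenation with itself). -/
def Walk.pow {G : EGraph} (c : Walk G) (n : ℕ) : Walk G :=
  ⟨c.src, (List.replicate n c.edges).flatten⟩

namespace EGraph
variable (G : EGraph)

/-- A walk is a genuine finite path: the first edge starts at the source and
consecutive edges match up. -/
def IsPath (p : Walk G) : Prop :=
  (∀ e, p.edges.head? = some e → G.s e = p.src) ∧
    p.edges.Chain' (fun a b => G.r a = G.s b)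

/-- A subset of vertices is hereditary. -/
def Hereditary (H : Set G.V) : Prop :=
  ∀ p : Walk G, G.IsPath p → p.src ∈ H → p.rng ∈ H

/-- A regular vertex: emits at least one and finitely many edges. -/
def Regular (v : G.V) : Prop :=
  {e | G.s e = v}.Finite ∧ {e | G.s e = v}.Nonempty

/-- A subset of vertices is saturated. -/
def Saturated (H : Set G.V) : Prop :=
  ∀ v, G.Regular v → (∀ e, G.s e = v → G.r e ∈ H) → v ∈ H

/-- The saturated closure: the smallest hereditary and saturated set containing `H`. -/
def satClosure (H : Set G.V) : Set G.V :=
  ⋂₀ {K | H ⊆ K ∧ G.Hereditary K ∧ G.Saturated K}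

/-- The set of vertices of a walk (sources of its edges). -/
def verts (c : Walk G) : Set G.V := {v | ∃ e ∈ c.edges, G.s e = v}

/-- A cycle: a nontrivial closed path with no repeated vertices except the base. -/
def IsCycle (c : Walk G) : Prop :=
  G.IsPath c ∧ c.edges ≠ [] ∧ c.rng = c.src ∧ (c.edges.map G.s).Nodup

/-- A cycle (or walk) has no exits: each vertex on it emits only the edge of the walk. -/
def NoExits (c : Walk G) : Prop :=
  ∀ e ∈ c.edges, ∀ e', G.s e' = G.s e → e' = e

/-- `F_E(H)`: paths reaching `H` exactly at their final vertex. -/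
def FE (H : Set G.V) : Set (Walk G) :=
  {α | G.IsPath α ∧ α.edges ≠ [] ∧ α.src ∉ H ∧
       (∀ e ∈ α.edges.dropLast, G.r e ∉ H) ∧ α.rng ∈ H}

/-- The breaking vertices of `H`. -/
def BH (H : Set G.V) : Set G.V :=
  {v | v ∉ H ∧ {e | G.s e = v}.Infinite ∧
       {e | G.s e = v ∧ G.r e ∉ H}.Nonempty ∧ {e | G.s e = v ∧ G.r e ∉ H}.Finite}

/-- `F_E'(H)`: members of `F_E(H)` whose last edge has source not a breaking vertex. -/
def FE' (H : Set G.V) : Set (Walk G) :=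
  {α | α ∈ G.FE H ∧ ∀ e, α.edges.getLast? = some e → G.s e ∉ G.BH H}

/-- Condition (F): `H ∪ F_E'(H) ∪ {α ∈ Path(E) : r(α) ∈ B_H}` is finite. -/
def ConditionF (H : Set G.V) : Prop :=
  H.Finite ∧ (G.FE' H).Finite ∧ {α : Walk G | G.IsPath α ∧ α.rng ∈ G.BH H}.Finite

/-- An infinite path, given by its sequence of edges. -/
def IsInfPath (x : ℕ → G.E) : Prop := ∀ i, G.r (x i) = G.s (x (i + 1))

/-- The edge sequence of the concatenation of a finite walk with an infinite edge sequence. -/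
def concatSeq (p : Walk G) (x : ℕ → G.E) : ℕ → G.E := fun n =>
  if h : n < p.edges.length then p.edges.get ⟨n, h⟩ else x (n - p.edges.length)

end EGraph

namespace EGraph
variable (G : EGraph)

/-- A generalized path: either a finite walk or an infinite edge sequence. -/
def BP : Type := Walk G ⊕ (ℕ → G.E)

/-- Source of a generalized path. -/
def bsrc : G.BP → G.V
  | .inl α => α.src
  | .inr x => G.s (x 0)

/-- A sink: a vertex emitting no edges. -/
def IsSink (v : G.V) : Prop := ∀ e, G.s e ≠ v

/-- An infinite emitter. -/
def InfEmitter (v : G.V) : Prop := {e | G.s e = v}.Infinite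

/-- A boundary path: an infinite path, or a finite path ending at a sink or an
infinite emitter. -/
def IsBoundary : G.BP → Prop
  | .inl α => G.IsPath α ∧ (G.IsSink α.rng ∨ G.InfEmitter α.rng)
  | .inr x => G.IsInfPath x

/-- The boundary path space `X` of the graph. -/
def XB : Type := {p : G.BP // G.IsBoundary p}

/-- The set of generalized paths extending a finite walk `μ`. -/
def extends' (μ : Walk G) : Set G.BP :=
  {p | G.bsrc p = μ.src ∧ (match p with
    | .inl α => μ.edges <+: α.edges
    | .inr x => List.ofFn (fun i : Fin μ.edges.length => x i) = μ.edges)}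

/-- The cylinder set `Z(μ)` in the boundary path space. -/
def Zset (μ : Walk G) : Set G.XB := {x | x.1 ∈ G.extends' μ}

/-- The basic set `Z(μ ∖ F)`. -/
def Zminus (μ : Walk G) (F : Set G.E) : Set G.XB :=
  G.Zset μ \ ⋃ e ∈ F, G.Zset ⟨μ.src, μ.edges ++ [e]⟩

/-- The cylinder-set topology on the boundary path space. -/
instance XBtop : TopologicalSpace G.XB :=
  TopologicalSpace.generateFrom
    {S | ∃ (μ : Walk G) (F : Set G.E), G.IsPath μ ∧ F.Finite ∧
          (∀ e ∈ F, G.s e = μ.rng) ∧ S = G.Zminus μ F}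

/-- `e` is an edge occurring in a generalized path. -/
def edgeOf (e : G.E) : G.BP → Prop
  | .inl α => e ∈ α.edges
  | .inr x => ∃ i, x i = e

/-- `U_H`: boundary paths visiting `H` (with `r(x₀) := s(x)`). -/
def UH (H : Set G.V) : Set G.XB :=
  {x | G.bsrc x.1 ∈ H ∨ ∃ e, G.edgeOf e x.1 ∧ G.r e ∈ H}

/-- `U_S`: finite boundary paths with range in `S`. -/
def US (S : Set G.V) : Set G.XB :=
  {x | ∃ α : Walk G, x.1 = Sum.inl α ∧ α.rng ∈ S}

/-- `U_{H,S} = U_H ⊔ U_S`. -/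
def UHS (H S : Set G.V) : Set G.XB := G.UH H ∪ G.US S

/-- `F_α`: the edges emitted by `r(α)` with range outside `H`. -/
def Falpha (H : Set G.V) (α : Walk G) : Set G.E :=
  {e | G.s e = α.rng ∧ G.r e ∉ H}

/-- Concatenation of a finite walk with a generalized path. -/
def concatBP (μ : Walk G) : G.BP → G.BP
  | .inl α => .inl ⟨μ.src, μ.edges ++ α.edges⟩
  | .inr x => .inr (G.concatSeq μ x)

/-- Tail equivalence on the boundary path space: the equivalence induced by the graph
groupoid `G_E` on its unit space `X`. -/
def TailEquiv (x y : G.XB) : Prop :=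
  ∃ (μ ν : Walk G) (t : G.BP), G.IsPath μ ∧ G.IsPath ν ∧
    μ.rng = G.bsrc t ∧ ν.rng = G.bsrc t ∧
    x.1 = G.concatBP μ t ∧ y.1 = G.concatBP ν t

/-- Invariance of a subset of the unit space of the graph groupoid. -/
def InvariantX (U : Set G.XB) : Prop :=
  ∀ x y, G.TailEquiv x y → x ∈ U → y ∈ U

/-- Compact open invariant subsets of the unit space of the graph groupoid. -/
def COI (U : Set G.XB) : Prop := IsCompact U ∧ IsOpen U ∧ G.InvariantX U

/-- Minimal compact open invariant subsets. -/
def MinCOI (U : Set G.XB) : Prop :=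
  G.COI U ∧ U.Nonempty ∧ ∀ W, G.COI W → W ⊆ U → W = ∅ ∨ W = U

end EGraph

/-! A compact set of boundary paths has finitely many sources, since the cylinders
`{x | s(x) = v}` are open. An open invariant set `U` is determined by two finite sets of
vertices: those `v` whose whole cylinder lies in `U`, and those whose trivial path lies in `U`.
Indeed a finite boundary path is tail equivalent to the trivial path at its range, and an
infinite path in `U` has a basic neighbourhood `Z(μ ∖ F) ⊆ U`, which by invariance puts the
whole cylinder of the vertex `s(x_{|μ|+1})` into `U`. So the sum of the cardinalities of these
two sets strictly decreases along strict inclusions of compact open invariant sets. -/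

namespace EGraph
variable {G : EGraph}

lemma isPath_iff {p : Walk G} :
    G.IsPath p ↔ (∀ e, p.edges.head? = some e → G.s e = p.src) ∧
      p.edges.IsChain (fun a b => G.r a = G.s b) :=
  Iff.rfl

lemma isPath_nil (v : G.V) : G.IsPath ⟨v, []⟩ :=
  isPath_iff.2 ⟨fun e h => by simp at h, List.isChain_nil⟩

lemma rng_of_edges_eq_nil {p : Walk G} (h : p.edges = []) : p.rng = p.src := by
  simp [Walk.rng, h]

lemma rng_of_getLast?_eq {p : Walk G} {e : G.E} (h : p.edges.getLast? = some e) :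
    p.rng = G.r e := by
  simp [Walk.rng, h]

lemma rng_eq_r_getElem {p : Walk G} {n : ℕ} (h : n + 1 = p.edges.length) :
    p.rng = G.r (p.edges[n]'(by omega)) :=
  rng_of_getLast?_eq <| by
    rw [List.getLast?_eq_getElem?, show p.edges.length - 1 = n by omega, List.getElem?_eq_getElem]

lemma isPath_append {π β : Walk G} (hπ : G.IsPath π) (hβ : G.IsPath β) (h : π.rng = β.src) :
    G.IsPath (π.append β) := by
  refine isPath_iff.2 ⟨fun e he => ?_, ?_⟩
  · cases hp : π.edges with
    | nil =>
      simp only [Walk.append, hp, List.nil_append] at he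
      rw [hβ.1 e he, ← h, rng_of_edges_eq_nil hp]
      rfl
    | cons a l =>
      simp only [Walk.append, hp, List.cons_append, List.head?_cons, Option.some.injEq] at he
      subst he
      exact hπ.1 _ (by simp [hp])
  · refine List.isChain_append.2 ⟨hπ.2, hβ.2, fun a ha b hb => ?_⟩
    rw [← rng_of_getLast?_eq ha, hβ.1 b hb, h]

lemma rng_append {π β : Walk G} (h : π.rng = β.src) : (π.append β).rng = β.rng := by
  rcases List.eq_nil_or_concat β.edges with hb | ⟨l, e, hb⟩
  · rw [rng_of_edges_eq_nil hb, ← h]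
    simp [Walk.append, Walk.rng, hb]
  · rw [rng_of_getLast?_eq (p := β) (e := e) (by simp [hb]),
      rng_of_getLast?_eq (p := π.append β) (e := e) (by simp [Walk.append, hb])]

lemma isInfPath_concatSeq {π : Walk G} {ξ : ℕ → G.E} (hπ : G.IsPath π)
    (hξ : G.IsInfPath ξ) (h : π.rng = G.s (ξ 0)) : G.IsInfPath (G.concatSeq π ξ) := by
  intro n
  unfold concatSeq
  by_cases hn1 : n + 1 < π.edges.length
  · rw [dif_pos (by omega), dif_pos hn1]
    exact List.isChain_iff_getElem.1 hπ.2 n hn1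
  by_cases hn : n < π.edges.length
  · rw [dif_pos hn, dif_neg hn1, show n + 1 - π.edges.length = 0 by omega, ← h]
    exact (rng_eq_r_getElem (by omega)).symm
  · rw [dif_neg hn, dif_neg hn1, show n + 1 - π.edges.length = n - π.edges.length + 1 by omega]
    exact hξ _

lemma isBoundary_concatBP {π : Walk G} {p : G.BP} (hπ : G.IsPath π) (h : π.rng = G.bsrc p)
    (hp : G.IsBoundary p) : G.IsBoundary (G.concatBP π p) := by
  cases p with
  | inl β =>
    obtain ⟨hβ, hend⟩ := hp
    refine ⟨isPath_append hπ hβ h, ?_⟩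
    change G.IsSink (π.append β).rng ∨ G.InfEmitter (π.append β).rng
    rwa [rng_append h]
  | inr ξ => exact isInfPath_concatSeq hπ hp h

lemma concatBP_nil {v : G.V} {p : G.BP} (h : G.bsrc p = v) : G.concatBP ⟨v, []⟩ p = p := by
  subst h
  cases p with
  | inl α => rfl
  | inr ξ => rfl

def eAt : G.BP → ℕ → Option G.E
  | .inl α, n => α.edges[n]?
  | .inr ξ, n => some (ξ n)

lemma mem_Zset_iff {μ : Walk G} {x : G.XB} :
    x ∈ G.Zset μ ↔ G.bsrc x.1 = μ.src ∧
      ∀ i (h : i < μ.edges.length), eAt x.1 i = some μ.edges[i] := by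
  obtain ⟨p | ξ, hx⟩ := x
  · exact and_congr_right fun _ => List.prefix_iff_getElem?
  · refine and_congr_right fun _ => ⟨fun h i hi => ?_, fun h => ?_⟩
    · change List.ofFn (fun i : Fin μ.edges.length => ξ i) = μ.edges at h
      simpa [eAt, hi] using congrArg (·[i]?) h
    · exact List.ext_getElem (by simp) fun i _ hi => by simpa [eAt] using h i hi

lemma eAt_concatBP_of_lt {π : Walk G} {p : G.BP} {i : ℕ} (h : i < π.edges.length) :
    eAt (G.concatBP π p) i = some π.edges[i] := by
  cases p with
  | inl β => simp [concatBP, eAt, List.getElem?_append_left h]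
  | inr ξ => simp [concatBP, eAt, concatSeq, h]

lemma bsrc_concatBP {π : Walk G} {p : G.BP} (hπ : G.IsPath π) (hne : π.edges ≠ []) :
    G.bsrc (G.concatBP π p) = π.src := by
  cases p with
  | inl β => rfl
  | inr ξ =>
    obtain ⟨e, l, he⟩ := List.exists_cons_of_ne_nil hne
    simpa [bsrc, concatBP, concatSeq, he] using hπ.1 e (by simp [he])

lemma mem_Zset_congr {μ : Walk G} {x y : G.XB} (hsrc : G.bsrc x.1 = G.bsrc y.1)
    (h : ∀ i < μ.edges.length, eAt x.1 i = eAt y.1 i) : x ∈ G.Zset μ ↔ y ∈ G.Zset μ := by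
  simp only [mem_Zset_iff, hsrc]
  exact and_congr_right fun _ => forall₂_congr fun i hi => by rw [h i hi]

def prefixWalk (ξ : ℕ → G.E) (m : ℕ) : Walk G :=
  ⟨G.s (ξ 0), List.ofFn fun i : Fin m => ξ i⟩

lemma isPath_prefixWalk {ξ : ℕ → G.E} (hξ : G.IsInfPath ξ) (m : ℕ) :
    G.IsPath (prefixWalk ξ m) := by
  refine isPath_iff.2 ⟨fun e he => ?_, List.isChain_iff_getElem.2 fun i hi => ?_⟩
  · cases m with
    | zero => simp [prefixWalk] at he
    | succ k => simp_all [prefixWalk, List.ofFn_succ]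
  · simpa [prefixWalk] using hξ i

lemma rng_prefixWalk {ξ : ℕ → G.E} (hξ : G.IsInfPath ξ) (m : ℕ) :
    (prefixWalk ξ m).rng = G.s (ξ m) := by
  cases m with
  | zero => exact rng_of_edges_eq_nil (by simp [prefixWalk])
  | succ k =>
    rw [rng_eq_r_getElem (n := k) (by simp [prefixWalk])]
    simpa only [prefixWalk, List.getElem_ofFn] using hξ k

lemma mem_Zset_prefixWalk_iff {ξ : ℕ → G.E} {m : ℕ} {y : G.XB} :
    y ∈ G.Zset (prefixWalk ξ m) ↔
      G.bsrc y.1 = G.s (ξ 0) ∧ ∀ i < m, eAt y.1 i = some (ξ i) := by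
  simp [mem_Zset_iff, prefixWalk]

lemma Zset_prefixWalk_antitone (ξ : ℕ → G.E) : Antitone fun m => G.Zset (prefixWalk ξ m) :=
  fun _ _ hmn _ hy => by
    rw [mem_Zset_prefixWalk_iff] at hy ⊢
    exact ⟨hy.1, fun i hi => hy.2 i (by omega)⟩

lemma concatBP_prefixWalk_mem_Zset {ξ : ℕ → G.E} (hξ : G.IsInfPath ξ) {m : ℕ} (hm : 0 < m)
    {p : G.BP} {y : G.XB} (hy : y.1 = G.concatBP (prefixWalk ξ m) p) :
    y ∈ G.Zset (prefixWalk ξ m) := by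
  refine mem_Zset_prefixWalk_iff.2 ⟨?_, fun i hi => ?_⟩
  · rw [hy, bsrc_concatBP (isPath_prefixWalk hξ m) (by simp [prefixWalk]; omega)]
    rfl
  · rw [hy, eAt_concatBP_of_lt (by simpa [prefixWalk] using hi)]
    simp [prefixWalk]

lemma concatBP_prefixWalk_shift (ξ : ℕ → G.E) (m : ℕ) :
    G.concatBP (prefixWalk ξ m) (.inr fun i => ξ (m + i)) = .inr ξ := by
  refine congrArg Sum.inr (funext fun n => ?_)
  by_cases hn : n < m
  · simp [concatSeq, prefixWalk, hn]
  · simp [concatSeq, prefixWalk, hn, show m + (n - m) = n by omega]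

lemma isOpen_Zminus {μ : Walk G} {F : Set G.E} (hμ : G.IsPath μ) (hF : F.Finite)
    (hFs : ∀ e ∈ F, G.s e = μ.rng) : IsOpen (G.Zminus μ F) :=
  TopologicalSpace.GenerateOpen.basic _ ⟨μ, F, hμ, hF, hFs, rfl⟩

lemma isOpen_setOf_bsrc_eq (v : G.V) : IsOpen {x : G.XB | G.bsrc x.1 = v} := by
  convert isOpen_Zminus (isPath_nil v) Set.finite_empty (by simp) using 1
  ext x
  simp [Zminus, mem_Zset_iff]

lemma Zset_prefixWalk_subset_Zminus {μ : Walk G} {F : Set G.E} {x : G.XB} {ξ : ℕ → G.E}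
    (hxξ : x.1 = .inr ξ) (hx : x ∈ G.Zminus μ F) :
    G.Zset (prefixWalk ξ (μ.edges.length + 1)) ⊆ G.Zminus μ F := by
  intro y hy
  obtain ⟨hysrc, hyedges⟩ := mem_Zset_prefixWalk_iff.1 hy
  have hsrc : G.bsrc x.1 = G.bsrc y.1 := by rw [hysrc, hxξ]; rfl
  have hagree : ∀ i < μ.edges.length + 1, eAt x.1 i = eAt y.1 i := fun i hi => by
    rw [hyedges i hi, hxξ]; rfl
  obtain ⟨hxμ, hxF⟩ := hx
  refine ⟨(mem_Zset_congr hsrc fun i hi => hagree i (by omega)).1 hxμ, fun hyF => hxF ?_⟩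
  obtain ⟨e, he, hye⟩ := Set.mem_iUnion₂.1 hyF
  exact Set.mem_iUnion₂.2
    ⟨e, he, (mem_Zset_congr hsrc fun i hi => hagree i (by simpa using hi)).2 hye⟩

lemma exists_Zset_prefixWalk_subset {U : Set G.XB} (hU : IsOpen U) {x : G.XB} {ξ : ℕ → G.E}
    (hxξ : x.1 = .inr ξ) (hx : x ∈ U) : ∃ m, G.Zset (prefixWalk ξ m) ⊆ U := by
  induction hU with
  | basic S hS =>
    obtain ⟨μ, F, -, -, -, rfl⟩ := hS
    exact ⟨_, Zset_prefixWalk_subset_Zminus hxξ hx⟩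
  | univ => exact ⟨0, Set.subset_univ _⟩
  | inter s t _ _ ihs iht =>
    obtain ⟨m, hm⟩ := ihs hx.1
    obtain ⟨n, hn⟩ := iht hx.2
    exact ⟨max m n, Set.subset_inter ((Zset_prefixWalk_antitone ξ (le_max_left m n)).trans hm)
      ((Zset_prefixWalk_antitone ξ (le_max_right m n)).trans hn)⟩
  | sUnion S _ ih =>
    obtain ⟨s, hs, hxs⟩ := hx
    obtain ⟨m, hm⟩ := ih s hs hxs
    exact ⟨m, hm.trans (Set.subset_sUnion_of_mem hs)⟩

lemma TailEquiv.symm {x y : G.XB} (h : G.TailEquiv x y) : G.TailEquiv y x := by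
  obtain ⟨μ, ν, t, hμ, hν, hμt, hνt, hx, hy⟩ := h
  exact ⟨ν, μ, t, hν, hμ, hνt, hμt, hy, hx⟩

lemma InvariantX.mem_iff {U : Set G.XB} (hU : G.InvariantX U) {x y : G.XB}
    (h : G.TailEquiv x y) : x ∈ U ↔ y ∈ U :=
  ⟨hU x y h, hU y x h.symm⟩

lemma tailEquiv_of_eq_concatBP {π : Walk G} {x z : G.XB} (hπ : G.IsPath π)
    (h : π.rng = G.bsrc z.1) (hx : x.1 = G.concatBP π z.1) : G.TailEquiv x z :=
  ⟨π, ⟨G.bsrc z.1, []⟩, z.1, hπ, isPath_nil _, h, rfl, hx, (concatBP_nil rfl).symm⟩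

lemma exists_forall_bsrc_eq_mem {U : Set G.XB} (hUo : IsOpen U) (hUi : G.InvariantX U)
    {x : G.XB} {ξ : ℕ → G.E} (hxξ : x.1 = .inr ξ) (hx : x ∈ U) :
    ∃ m, ∀ z : G.XB, G.bsrc z.1 = G.s (ξ m) → z ∈ U := by
  have hξ : G.IsInfPath ξ := by
    have hb := x.2
    rwa [hxξ] at hb
  obtain ⟨m, hm⟩ := exists_Zset_prefixWalk_subset hUo hxξ hx
  refine ⟨m + 1, fun z hz => ?_⟩
  have hrng : (prefixWalk ξ (m + 1)).rng = G.bsrc z.1 := by rw [rng_prefixWalk hξ, hz]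
  let w : G.XB := ⟨_, isBoundary_concatBP (isPath_prefixWalk hξ _) hrng z.2⟩
  have hw : w ∈ U :=
    hm (Zset_prefixWalk_antitone ξ m.le_succ (concatBP_prefixWalk_mem_Zset hξ m.succ_pos rfl))
  exact hUi w z (tailEquiv_of_eq_concatBP (isPath_prefixWalk hξ _) hrng rfl) hw

def sources (G : EGraph) (U : Set G.XB) : Set G.V := (fun x : G.XB => G.bsrc x.1) '' U

/-- For `U = U_{H,S}` this is `H`. -/
def fullSources (G : EGraph) (U : Set G.XB) : Set G.V :=
  {v | v ∈ G.sources U ∧ ∀ z : G.XB, G.bsrc z.1 = v → z ∈ U}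

/-- For `U = U_{H,S}` this is `S` together with the sinks and infinite emitters in `H`. -/
def trivialSources (G : EGraph) (U : Set G.XB) : Set G.V :=
  {v | ∃ x ∈ U, x.1 = .inl ⟨v, []⟩}

lemma sources_finite {U : Set G.XB} (hU : IsCompact U) : (G.sources U).Finite := by
  obtain ⟨t, ht⟩ := hU.elim_finite_subcover (fun v => {x : G.XB | G.bsrc x.1 = v})
    isOpen_setOf_bsrc_eq fun x _ => Set.mem_iUnion.2 ⟨_, rfl⟩
  refine t.finite_toSet.subset ?_
  rintro _ ⟨x, hx, rfl⟩
  obtain ⟨v, hv, hxv⟩ := Set.mem_iUnion₂.1 (ht hx)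
  rwa [← hxv] at hv

lemma fullSources_mono : Monotone G.fullSources :=
  fun _ _ h _ ⟨hv, hall⟩ => ⟨Set.image_mono h hv, fun z hz => h (hall z hz)⟩

lemma trivialSources_mono : Monotone G.trivialSources :=
  fun _ _ h _ ⟨x, hx, hxv⟩ => ⟨x, h hx, hxv⟩

lemma fullSources_subset_sources (U : Set G.XB) : G.fullSources U ⊆ G.sources U :=
  fun _ hv => hv.1

lemma trivialSources_subset_sources (U : Set G.XB) : G.trivialSources U ⊆ G.sources U :=
  fun v ⟨x, hx, hxv⟩ => ⟨x, hx, by simp only [hxv]; rfl⟩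

lemma subset_of_fullSources_subset {U W : Set G.XB} (hUi : G.InvariantX U) (hWo : IsOpen W)
    (hWi : G.InvariantX W) (hfull : G.fullSources W ⊆ G.fullSources U)
    (htriv : G.trivialSources W ⊆ G.trivialSources U) : W ⊆ U := by
  rintro ⟨α | ξ, hb⟩ hy
  · let t : G.XB := ⟨.inl ⟨α.rng, []⟩, isPath_nil _, hb.2⟩
    have hyt : G.TailEquiv ⟨.inl α, hb⟩ t := tailEquiv_of_eq_concatBP hb.1 rfl <| by
      change Sum.inl α = Sum.inl ⟨α.src, α.edges ++ []⟩
      simp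
    obtain ⟨t', ht'U, ht'⟩ := htriv ⟨t, (hWi.mem_iff hyt).1 hy, rfl⟩
    obtain rfl : t' = t := Subtype.ext ht'
    exact (hUi.mem_iff hyt).2 ht'U
  · obtain ⟨m, hm⟩ := exists_forall_bsrc_eq_mem hWo hWi rfl hy
    let t : G.XB := ⟨.inr fun i => ξ (m + i), fun i => hb (m + i)⟩
    have hts : G.bsrc t.1 = G.s (ξ m) := rfl
    have htU : t ∈ U := (hfull ⟨⟨t, hm t hts, hts⟩, hm⟩).2 t hts
    refine (hUi.mem_iff ?_).1 htU
    exact (tailEquiv_of_eq_concatBP (isPath_prefixWalk hb m)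
      ((rng_prefixWalk hb m).trans hts.symm) (concatBP_prefixWalk_shift ξ m).symm).symm

noncomputable def sourceRank (G : EGraph) (U : Set G.XB) : ℕ :=
  (G.fullSources U).ncard + (G.trivialSources U).ncard

lemma COI.subset_of_sourceRank_le {U W : Set G.XB} (hU : G.COI U) (hWi : G.InvariantX W)
    (hWU : W ⊆ U) (h : G.sourceRank U ≤ G.sourceRank W) : U ⊆ W := by
  have hfin := sources_finite hU.1
  have hfull := hfin.subset (fullSources_subset_sources U)
  have htriv := hfin.subset (trivialSources_subset_sources U)
  have := Set.ncard_le_ncard (fullSources_mono hWU) hfull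
  have := Set.ncard_le_ncard (trivialSources_mono hWU) htriv
  unfold sourceRank at h
  exact subset_of_fullSources_subset hWi hU.2.1 hU.2.2
    (Set.eq_of_subset_of_ncard_le (fullSources_mono hWU) (by omega) hfull).ge
    (Set.eq_of_subset_of_ncard_le (trivialSources_mono hWU) (by omega) htriv).ge

end EGraph

/-- the compact open invariant subsets of the unit space of the graph
groupoid satisfy the descending chain condition, and every nonempty one contains a
minimal one. -/
theorem coi_dcc_and_minimal (G : EGraph) :
    (∀ ch : ℕ → Set G.XB, (∀ n, G.COI (ch n)) → (∀ n, ch (n + 1) ⊆ ch n) →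
        ∃ N, ∀ n, N ≤ n → ch n = ch N) ∧
      (∀ U : Set G.XB, G.COI U → U.Nonempty → ∃ V, V ⊆ U ∧ G.MinCOI V) := by
  constructor
  · intro ch hch hsucc
    have hanti : Antitone ch := antitone_nat_of_succ_le hsucc
    refine ⟨Function.argmin fun n => G.sourceRank (ch n), fun n hn => (hanti hn).antisymm ?_⟩
    exact (hch _).subset_of_sourceRank_le (hch n).2.2 (hanti hn)
      (Function.argmin_le (fun n => G.sourceRank (ch n)) n)
  · intro U hU hne
    let S := {V | G.COI V ∧ V.Nonempty ∧ V ⊆ U}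
    have hUS : U ∈ S := ⟨hU, hne, subset_rfl⟩
    obtain ⟨hV, hVne, hVU⟩ := Function.argminOn_mem G.sourceRank S ⟨U, hUS⟩
    refine ⟨_, hVU, hV, hVne, fun W hW hWV => W.eq_empty_or_nonempty.imp_right fun hWne => ?_⟩
    exact hWV.antisymm (hV.subset_of_sourceRank_le hW.2.2 hWV
      (Function.argminOn_le G.sourceRank S ⟨hW, hWne, hWV.trans hVU⟩))
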